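/- Let μ be a dominant integral coweight and let w ∈ W₀ be a minimal coset representative for μ, and set x_w := t_{−w(μ)}w (the affine map v ↦ w(v) − w(μ)). Then ℓ(x_w) ≤ ℓ(t_{−w(μ)}u) for every u ∈ W₀, and ℓ(x_w) = ℓ(t_{−μ}) − ℓ(w), where moreover ℓ(t_{−μ}) = Σ_{α∈Φ⁺}⟨α, μ⟩ = ⟨2ρ, μ⟩; in particular ℓ(x_w) = ⟨2ρ, μ⟩ − ℓ(w). -/

import Mathlib

/-!
Common framework: a finite crystallographic reduced root system `Φ` inside the dual
of a finite-dimensional real vector space `V`, with a choice of positive roots `Pos`,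
simple roots `Delta`, coroots, and the finite Weyl group `W` (a subgroup of linear
automorphisms of `V` generated by the root reflections).  We also set up affine
hyperplanes, the fundamental alcove, separation counts, and alcove walks.
-/

open Module Finset

section BasicDefs

variable {V : Type*} [AddCommGroup V] [Module ℝ V]

/-- The affine transformation `t_ν u : v ↦ u(v) + ν`. -/
def affT (ν : V) (u : V ≃ₗ[ℝ] V) : V → V := fun v => u v + ν

/-- The affine hyperplane `H_{α,n} = {v : ⟨α, v⟩ = n}`. -/
def affHyp (α : Dual ℝ V) (n : ℤ) : Set V := {v | α v = (n : ℝ)}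

/-- `H_{α,n}` separates `S` and `T`: the affine functional `⟨α, ·⟩ - n` is strictly
positive everywhere on one of the two sets and strictly negative everywhere on the other. -/
def SepBy (α : Dual ℝ V) (n : ℤ) (S T : Set V) : Prop :=
  ((∀ v ∈ S, α v < (n : ℝ)) ∧ ∀ v ∈ T, (n : ℝ) < α v) ∨
  ((∀ v ∈ S, (n : ℝ) < α v) ∧ ∀ v ∈ T, α v < (n : ℝ))

/-- The contragredient action of `w` on `V*`:  `(w · α)(v) = α (w⁻¹ v)`. -/
def dAct (w : V ≃ₗ[ℝ] V) (α : Dual ℝ V) : Dual ℝ V := α.comp w.symm.toLinearMap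

end BasicDefs

/-- A finite crystallographic reduced root system spanning the dual of `V`, together
with a system of positive roots, the simple roots, the coroots and the Weyl group. -/
structure RootSystemCtx (V : Type*) [AddCommGroup V] [Module ℝ V]
    [FiniteDimensional ℝ V] where
  Φ : Finset (Dual ℝ V)
  Pos : Finset (Dual ℝ V)
  Delta : Finset (Dual ℝ V)
  coroot : Dual ℝ V → V
  W : Subgroup (V ≃ₗ[ℝ] V)
  pos_subset : Pos ⊆ Φ
  delta_subset : Delta ⊆ Pos
  root_ne_zero : ∀ α ∈ Φ, α ≠ 0
  span_eq_top : Submodule.span ℝ (Φ : Set (Dual ℝ V)) = ⊤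
  pos_partition : ∀ α ∈ Φ, (α ∈ Pos ∧ -α ∉ Pos) ∨ (-α ∈ Pos ∧ α ∉ Pos)
  coroot_self : ∀ α ∈ Φ, α (coroot α) = 2
  crystallographic : ∀ α ∈ Φ, ∀ β ∈ Φ, ∃ n : ℤ, β (coroot α) = (n : ℝ)
  reduced : ∀ α ∈ Φ, ∀ c : ℝ, c • α ∈ Φ → c = 1 ∨ c = -1
  root_reflect_mem : ∀ α ∈ Φ, ∀ β ∈ Φ, β - β (coroot α) • α ∈ Φ
  delta_indep : LinearIndependent ℝ (fun x : {a : Dual ℝ V // a ∈ Delta} => x.1)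
  pos_of_delta : ∀ α ∈ Pos, ∃ c : Dual ℝ V → ℕ, α = ∑ β ∈ Delta, (c β : ℝ) • β
  W_gen : W = Subgroup.closure
    {g : V ≃ₗ[ℝ] V | ∃ α ∈ Φ, ∀ v : V, g v = v - α v • coroot α}

namespace RootSystemCtx

variable {V : Type*} [AddCommGroup V] [Module ℝ V] [FiniteDimensional ℝ V]

section CtxDefs

variable (C : RootSystemCtx V)

/-- `ρ`, the half sum of the positive roots. -/
noncomputable def rho : Dual ℝ V := (2⁻¹ : ℝ) • ∑ α ∈ C.Pos, α

open Classical in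
/-- The inversion set `{α ∈ Φ⁺ : w(α) ∈ -Φ⁺}` of `w`. -/
noncomputable def invSet (w : V ≃ₗ[ℝ] V) : Finset (Dual ℝ V) :=
  C.Pos.filter fun α => -(dAct w α) ∈ C.Pos

/-- The length `ℓ(w) = #{α ∈ Φ⁺ : w(α) ∈ -Φ⁺}`. -/
noncomputable def len (w : V ≃ₗ[ℝ] V) : ℕ := (C.invSet w).card

/-- `lam` is an integral coweight: `⟨α, lam⟩ ∈ ℤ` for all roots `α`. -/
def IsIntegral (lam : V) : Prop := ∀ α ∈ C.Φ, ∃ n : ℤ, α lam = (n : ℝ)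

/-- `lam` is dominant: `⟨α, lam⟩ ≥ 0` for all positive roots `α`. -/
def IsDominant (lam : V) : Prop := ∀ α ∈ C.Pos, 0 ≤ α lam

/-- `w` is a minimal(-length) coset representative for `lam`, i.e. `w ∈ W₀` and
`ℓ(w) ≤ ℓ(v)` for every `v ∈ w W_{0,lam}`. -/
def IsMinRep (w : V ≃ₗ[ℝ] V) (lam : V) : Prop :=
  w ∈ C.W ∧ ∀ u ∈ C.W, u lam = lam → C.len w ≤ C.len (w * u)

/-- The (open) fundamental alcove `A`. -/
def alcove : Set V := {v | ∀ α ∈ C.Pos, 0 < α v ∧ α v < 1}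

/-- The closure of the fundamental alcove. -/
def closedAlcove : Set V := {v | ∀ α ∈ C.Pos, 0 ≤ α v ∧ α v ≤ 1}

/-- The open dominant Weyl chamber `C`. -/
def chamber : Set V := {v | ∀ α ∈ C.Pos, 0 < α v}

/-- The number of affine hyperplanes `H_{α,n}` (`α ∈ Φ⁺`, `n ∈ ℤ`) separating `S` and `T`. -/
noncomputable def sepCount (S T : Set V) : ℕ :=
  Set.ncard {p : Dual ℝ V × ℤ | p.1 ∈ C.Pos ∧ SepBy p.1 p.2 S T}

/-- The length of an affine transformation: the number of affine hyperplanes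
separating `A` and `f(A)`. -/
noncomputable def affLen (f : V → V) : ℕ := C.sepCount C.alcove (f '' C.alcove)

/-- The coroot lattice `Q^∨`. -/
def Qv : AddSubgroup V := AddSubgroup.closure (C.coroot '' (C.Φ : Set (Dual ℝ V)))

/-- `b` is an alcove: a transform of the fundamental alcove under the affine Weyl
group `Q^∨ ⋊ W₀`. -/
def IsAlcoveSet (b : Set V) : Prop := ∃ ν ∈ C.Qv, ∃ u ∈ C.W, b = affT ν u '' C.alcove

/-- The affine reflection through the hyperplane `H_{α,n}`. -/
def reflH (α : Dual ℝ V) (n : ℤ) : V → V := fun v => v - (α v - (n : ℝ)) • C.coroot α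

/-- `H_{α,n}` (with `α ∈ Φ⁺`) supports a codimension-one face of the alcove `b`:
it is the unique affine hyperplane separating `b` from its reflection through `H_{α,n}`. -/
def IsWall (α : Dual ℝ V) (n : ℤ) (b : Set V) : Prop :=
  α ∈ C.Pos ∧ SepBy α n b (C.reflH α n '' b) ∧
    ∀ β ∈ C.Pos, ∀ m : ℤ, SepBy β m b (C.reflH α n '' b) → β = α ∧ m = n

open Classical in
/-- `Φ_M = Φ ∩ ℤΔ_M`, the roots of the Levi attached to `Δ_M ⊆ Δ`. -/
noncomputable def PhiM (ΔM : Finset (Dual ℝ V)) : Finset (Dual ℝ V) :=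
  C.Φ.filter fun α => α ∈ Submodule.span ℤ (ΔM : Set (Dual ℝ V))

/-- `W_{0,M}`, the subgroup of `W₀` generated by the reflections in the roots of `Φ_M`. -/
def WM (ΔM : Finset (Dual ℝ V)) : Subgroup (V ≃ₗ[ℝ] V) :=
  Subgroup.closure {g : V ≃ₗ[ℝ] V | ∃ α ∈ C.PhiM ΔM, ∀ v : V, g v = v - α v • C.coroot α}

/-- `lam` is `M`-dominant: `⟨β, lam⟩ ≥ 0` for every `β ∈ Φ_M⁺ = Φ_M ∩ Φ⁺`. -/
def IsMDominant (ΔM : Finset (Dual ℝ V)) (lam : V) : Prop :=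
  ∀ β, β ∈ C.PhiM ΔM → β ∈ C.Pos → 0 ≤ β lam

end CtxDefs

/-- An alcove walk of length `len`, starting at the fundamental alcove: at each step
`i < len` we are given a wall `H_{root i, lev i}` of the alcove `alc i`, and
`alc (i+1)` is either `alc i` (a folding) or its reflection through that wall (a crossing). -/
structure Walk (C : RootSystemCtx V) where
  len : ℕ
  alc : ℕ → Set V
  root : ℕ → Dual ℝ V
  lev : ℕ → ℤ
  start : alc 0 = C.alcove
  isAlcove : ∀ i ≤ len, C.IsAlcoveSet (alc i)
  wall : ∀ i < len, C.IsWall (root i) (lev i) (alc i)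
  step : ∀ i < len, alc (i + 1) = alc i ∨ alc (i + 1) = C.reflH (root i) (lev i) '' alc i

namespace Walk

variable {C : RootSystemCtx V}

/-- Step `i` is a folding. -/
def IsFolding (Wk : Walk C) (i : ℕ) : Prop := Wk.alc (i + 1) = Wk.alc i

/-- Step `i` is a crossing. -/
def IsCrossing (Wk : Walk C) (i : ℕ) : Prop := Wk.alc (i + 1) ≠ Wk.alc i

/-- The affine functional of step `i` is positive on the current alcove
(positivity for the dominant orientation). -/
def PosAt (Wk : Walk C) (i : ℕ) : Prop := ∀ v ∈ Wk.alc i, (Wk.lev i : ℝ) < Wk.root i v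

/-- The affine functional of step `i` is negative on the current alcove. -/
def NegAt (Wk : Walk C) (i : ℕ) : Prop := ∀ v ∈ Wk.alc i, Wk.root i v < (Wk.lev i : ℝ)

open Classical in
/-- `c⁺`: the number of crossings positive for the dominant orientation. -/
noncomputable def cPlus (Wk : Walk C) : ℕ :=
  ((Finset.range Wk.len).filter fun i => Wk.IsCrossing i ∧ Wk.PosAt i).card

open Classical in
/-- `f⁺`: the number of foldings. -/
noncomputable def fPlus (Wk : Walk C) : ℕ :=
  ((Finset.range Wk.len).filter fun i => Wk.IsFolding i).card

/-- Positively folded for the dominant orientation. -/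
def PosFolded (Wk : Walk C) : Prop := ∀ i < Wk.len, Wk.IsFolding i → Wk.NegAt i

/-- Positivity of step `i` for the parabolic orientation attached to the Levi root
set `ΦM`: for `α ∉ Φ_M` positivity on the current alcove; for `α ∈ Φ_M` the sign on
the current alcove agrees with the sign on the fundamental alcove. -/
def PosAtP (Wk : Walk C) (ΦM : Finset (Dual ℝ V)) (i : ℕ) : Prop :=
  (Wk.root i ∉ ΦM ∧ Wk.PosAt i) ∨
  (Wk.root i ∈ ΦM ∧
    ((Wk.PosAt i ∧ ∀ v ∈ C.alcove, (Wk.lev i : ℝ) < Wk.root i v) ∨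
     (Wk.NegAt i ∧ ∀ v ∈ C.alcove, Wk.root i v < (Wk.lev i : ℝ))))

/-- Negativity of step `i` for the parabolic orientation attached to `ΦM`. -/
def NegAtP (Wk : Walk C) (ΦM : Finset (Dual ℝ V)) (i : ℕ) : Prop :=
  (Wk.root i ∉ ΦM ∧ Wk.NegAt i) ∨
  (Wk.root i ∈ ΦM ∧
    ((Wk.PosAt i ∧ ∀ v ∈ C.alcove, Wk.root i v < (Wk.lev i : ℝ)) ∨
     (Wk.NegAt i ∧ ∀ v ∈ C.alcove, (Wk.lev i : ℝ) < Wk.root i v)))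

open Classical in
/-- `c⁺` for the parabolic orientation attached to `ΦM`. -/
noncomputable def cPlusP (Wk : Walk C) (ΦM : Finset (Dual ℝ V)) : ℕ :=
  ((Finset.range Wk.len).filter fun i => Wk.IsCrossing i ∧ Wk.PosAtP ΦM i).card

/-- Positively folded for the parabolic orientation attached to `ΦM`. -/
def PosFoldedP (Wk : Walk C) (ΦM : Finset (Dual ℝ V)) : Prop :=
  ∀ i < Wk.len, Wk.IsFolding i → Wk.NegAtP ΦM i

/-- A minimal gallery from the fundamental alcove to `b`: all steps are crossings,
it ends at `b`, and its length is the number of hyperplanes separating `A` and `b`. -/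
def IsMinGallery (Wk : Walk C) (b : Set V) : Prop :=
  (∀ i < Wk.len, Wk.IsCrossing i) ∧ Wk.alc Wk.len = b ∧
    Wk.len = C.sepCount C.alcove b

/-- Two walks have the same type: same length and, at each step, the pullbacks of the
crossed/folded hyperplanes to the fundamental alcove coincide. -/
def SameType (Wk G : Walk C) : Prop :=
  Wk.len = G.len ∧ ∀ i < Wk.len,
    ∃ ν₁ ∈ C.Qv, ∃ u₁ ∈ C.W, ∃ ν₂ ∈ C.Qv, ∃ u₂ ∈ C.W,
      Wk.alc i = affT ν₁ u₁ '' C.alcove ∧ G.alc i = affT ν₂ u₂ '' C.alcove ∧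
      affT ν₁ u₁ ⁻¹' affHyp (Wk.root i) (Wk.lev i) =
        affT ν₂ u₂ ⁻¹' affHyp (G.root i) (G.lev i)

/-- The walk terminates at `v₀`: `v₀` lies in the closure of the final alcove. -/
def Terminates (Wk : Walk C) (v₀ : V) : Prop :=
  ∃ ν ∈ C.Qv, ∃ u ∈ C.W, Wk.alc Wk.len = affT ν u '' C.alcove ∧
    v₀ ∈ affT ν u '' C.closedAlcove

/-- Two walks are equal as walks: same length and identical sequences of alcoves,
roots and levels. -/
def Equiv (Wk Wk' : Walk C) : Prop :=
  Wk.len = Wk'.len ∧ (∀ i ≤ Wk.len, Wk.alc i = Wk'.alc i) ∧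
    ∀ i < Wk.len, Wk.root i = Wk'.root i ∧ Wk.lev i = Wk'.lev i

end Walk

end RootSystemCtx

/-! For `x = t_{-ν} u`, each positive root `α` takes its values on `x(A)` in an open unit
interval with integral endpoint `-⟨α, ν⟩ - [u⁻¹α < 0]`, so `ℓ(x) = Σ_{α>0} |⟨α, ν⟩ + [u⁻¹α < 0]|`.
Take `ν = w(μ)`. If `w⁻¹α > 0` then `⟨α, wμ⟩ = ⟨w⁻¹α, μ⟩ ≥ 0` by dominance; if `w⁻¹α < 0` then
`γ = -w⁻¹α` is an inversion of `w` and `⟨γ, μ⟩ ≥ 1`, since otherwise `s_γ` fixes `μ` while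
`ℓ(w s_γ) < ℓ(w)`, contradicting minimality. Hence `u = w` minimises every summand, and
re-indexing by `β = ±w⁻¹α ∈ Φ⁺` turns the sum into `Σ_{β>0} ⟨β, μ⟩ - #{inversions of w}`. -/

section DualAction

variable {V : Type*} [AddCommGroup V] [Module ℝ V]

@[simp] lemma dAct_apply (w : V ≃ₗ[ℝ] V) (α : Dual ℝ V) (v : V) : dAct w α v = α (w.symm v) :=
  rfl

lemma dAct_mul (w u : V ≃ₗ[ℝ] V) (α : Dual ℝ V) : dAct (w * u) α = dAct w (dAct u α) := rfl

@[simp] lemma dAct_one (α : Dual ℝ V) : dAct 1 α = α := rfl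

@[simp] lemma dAct_neg (w : V ≃ₗ[ℝ] V) (α : Dual ℝ V) : dAct w (-α) = -dAct w α := rfl

@[simp] lemma dAct_inv_dAct (w : V ≃ₗ[ℝ] V) (α : Dual ℝ V) : dAct w⁻¹ (dAct w α) = α := by
  rw [← dAct_mul, inv_mul_cancel, dAct_one]

@[simp] lemma dAct_dAct_inv (w : V ≃ₗ[ℝ] V) (α : Dual ℝ V) : dAct w (dAct w⁻¹ α) = α := by
  rw [← dAct_mul, mul_inv_cancel, dAct_one]

lemma dAct_reflection {α : Dual ℝ V} {x : V} (h : α x = 2) (β : Dual ℝ V) :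
    dAct (reflection h) β = β - β x • α := by
  ext v
  simp [reflection_apply, mul_comm]

end DualAction

lemma sepBy_iff_mem_Ioc {V : Type*} [AddCommGroup V] [Module ℝ V] {α : Dual ℝ V} {S T : Set V}
    {a b : ℤ} (hS : S.Nonempty) (hT : T.Nonempty) (hSa : ∀ v ∈ S, a < α v ∧ α v < a + 1)
    (hTb : ∀ v ∈ T, b < α v ∧ α v < b + 1) (n : ℤ) :
    SepBy α n S T ↔ n ∈ Ioc a b ∪ Ioc b a := by
  obtain ⟨s, hs⟩ := hS
  obtain ⟨t, ht⟩ := hT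
  have hs' := hSa s hs
  have ht' := hTb t ht
  simp only [SepBy, mem_union, mem_Ioc]
  constructor
  · rintro (⟨hS', hT'⟩ | ⟨hS', hT'⟩)
    · have h1 : (a : ℝ) < n := hs'.1.trans (hS' s hs)
      have h2 : (n : ℝ) < b + 1 := (hT' t ht).trans ht'.2
      exact Or.inl ⟨by exact_mod_cast h1, Int.lt_add_one_iff.1 (by exact_mod_cast h2)⟩
    · have h1 : (b : ℝ) < n := ht'.1.trans (hT' t ht)
      have h2 : (n : ℝ) < a + 1 := (hS' s hs).trans hs'.2
      exact Or.inr ⟨by exact_mod_cast h1, Int.lt_add_one_iff.1 (by exact_mod_cast h2)⟩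
  · rintro (⟨h1, h2⟩ | ⟨h1, h2⟩)
    · have h1 : (a : ℝ) + 1 ≤ n := by exact_mod_cast h1
      have h2 : (n : ℝ) ≤ b := by exact_mod_cast h2
      exact Or.inl ⟨fun v hv => by linarith [hSa v hv], fun v hv => by linarith [hTb v hv]⟩
    · have h1 : (b : ℝ) + 1 ≤ n := by exact_mod_cast h1
      have h2 : (n : ℝ) ≤ a := by exact_mod_cast h2
      exact Or.inr ⟨fun v hv => by linarith [hSa v hv], fun v hv => by linarith [hTb v hv]⟩

namespace RootSystemCtx

variable {V : Type*} [AddCommGroup V] [Module ℝ V] [FiniteDimensional ℝ V] {C : RootSystemCtx V}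

lemma neg_mem_pos_of_notMem {β : Dual ℝ V} (hβ : β ∈ C.Φ) (h : β ∉ C.Pos) : -β ∈ C.Pos :=
  ((C.pos_partition β hβ).resolve_left fun h' => h h'.1).1

lemma neg_notMem_pos {β : Dual ℝ V} (hβ : β ∈ C.Pos) : -β ∉ C.Pos :=
  ((C.pos_partition β (C.pos_subset hβ)).resolve_right fun h' => h'.2 hβ).2

lemma mem_pos_iff_pos_apply {v : V} (hv : v ∈ C.chamber) {β : Dual ℝ V} (hβ : β ∈ C.Φ) :
    β ∈ C.Pos ↔ 0 < β v := by
  refine ⟨fun h => hv β h, fun h => by_contra fun h' => ?_⟩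
  have := hv _ (neg_mem_pos_of_notMem hβ h')
  simp only [LinearMap.neg_apply] at this
  linarith

lemma neg_mem_pos_iff_apply_neg {v : V} (hv : v ∈ C.chamber) {β : Dual ℝ V} (hβ : β ∈ C.Φ) :
    -β ∈ C.Pos ↔ β v < 0 := by
  have hβ' : -β ∈ C.Φ := by
    have := C.root_reflect_mem β hβ β hβ
    rwa [C.coroot_self β hβ, two_smul, sub_add_cancel_left] at this
  rw [mem_pos_iff_pos_apply hv hβ', LinearMap.neg_apply, neg_pos]

lemma neg_one_lt_apply_of_mem_alcove {v : V} (hv : v ∈ C.alcove) {β : Dual ℝ V}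
    (hβ : β ∈ C.Φ) (h : β ∉ C.Pos) : -1 < β v ∧ β v < 0 := by
  have := hv _ (neg_mem_pos_of_notMem hβ h)
  simp only [LinearMap.neg_apply] at this
  constructor <;> linarith

variable (C) in
lemma exists_forall_delta_apply_eq_one : ∃ v : V, ∀ δ ∈ C.Delta, δ v = 1 := by
  have hli : LinearIndepOn ℝ id (C.Delta : Set (Dual ℝ V)) := C.delta_indep
  let b := Basis.extend hli
  refine ⟨(evalEquiv ℝ V).symm b.sumCoords, fun δ hδ => ?_⟩
  have hmem : δ ∈ hli.extend (Set.subset_univ _) := hli.subset_extend _ hδ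
  have := b.sumCoords_self_apply (i := ⟨δ, hmem⟩)
  rwa [Basis.extend_apply_self, ← apply_evalEquiv_symm_apply] at this

variable (C) in
lemma chamber_nonempty : C.chamber.Nonempty := by
  obtain ⟨v, hv⟩ := C.exists_forall_delta_apply_eq_one
  refine ⟨v, fun α hα => ?_⟩
  obtain ⟨c, rfl⟩ := C.pos_of_delta α hα
  have hval : (∑ β ∈ C.Delta, (c β : ℝ) • β) v = ∑ β ∈ C.Delta, (c β : ℝ) := by
    simp only [LinearMap.sum_apply, LinearMap.smul_apply, smul_eq_mul]
    exact Finset.sum_congr rfl fun β hβ => by rw [hv β hβ, mul_one]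
  rw [hval]
  refine (Finset.sum_nonneg fun β _ => Nat.cast_nonneg _).lt_of_ne fun h => ?_
  rw [eq_comm, Finset.sum_eq_zero_iff_of_nonneg fun β _ => Nat.cast_nonneg _] at h
  refine C.root_ne_zero _ (C.pos_subset hα) (Finset.sum_eq_zero fun β hβ => ?_)
  rw [h β hβ, zero_smul]

variable (C) in
lemma alcove_nonempty : C.alcove.Nonempty := by
  obtain ⟨v, hv⟩ := C.chamber_nonempty
  set M : ℝ := 1 + ∑ α ∈ C.Pos, α v
  have hlt : ∀ α ∈ C.Pos, α v < M := fun α hα => by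
    have := Finset.single_le_sum (fun β hβ => (hv β hβ).le) hα
    linarith
  have hM : 0 < M := add_pos_of_pos_of_nonneg one_pos (Finset.sum_nonneg fun β hβ => (hv β hβ).le)
  refine ⟨M⁻¹ • v, fun α hα => ?_⟩
  rw [map_smul, smul_eq_mul, inv_mul_lt_one₀ hM]
  exact ⟨by have := hv α hα; positivity, hlt α hα⟩

lemma reflection_mem_W {α : Dual ℝ V} (hα : α ∈ C.Φ) : reflection (C.coroot_self α hα) ∈ C.W := by
  rw [C.W_gen]
  exact Subgroup.subset_closure ⟨α, hα, fun v => reflection_apply v _⟩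

lemma dAct_mem {w : V ≃ₗ[ℝ] V} (hw : w ∈ C.W) {α : Dual ℝ V} (hα : α ∈ C.Φ) : dAct w α ∈ C.Φ := by
  rw [C.W_gen] at hw
  induction hw using Subgroup.closure_induction'' generalizing α with
  | mem g hg | inv_mem g hg =>
    obtain ⟨γ, hγ, hg⟩ := hg
    obtain rfl : g = reflection (C.coroot_self γ hγ) := LinearEquiv.ext fun v => hg v
    simp only [reflection_inv, dAct_reflection]
    exact C.root_reflect_mem γ hγ α hα
  | one => exact hα
  | mul x y _ _ hx hy => exact hx (hy hα)

lemma IsIntegral.apply {ν : V} (hν : C.IsIntegral ν) {w : V ≃ₗ[ℝ] V} (hw : w ∈ C.W) :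
    C.IsIntegral (w ν) :=
  fun _ hα => hν _ (dAct_mem (inv_mem hw) hα)

lemma mem_invSet {w : V ≃ₗ[ℝ] V} {α : Dual ℝ V} :
    α ∈ C.invSet w ↔ α ∈ C.Pos ∧ -dAct w α ∈ C.Pos := by
  classical
  simp [invSet]

lemma invSet_eq_filter {v : V} (hv : v ∈ C.chamber) {w : V ≃ₗ[ℝ] V} (hw : w ∈ C.W) :
    C.invSet w = C.Pos.filter fun α => α (w.symm v) < 0 := by
  ext α
  rw [mem_invSet, mem_filter]
  exact and_congr_right fun hα => neg_mem_pos_iff_apply_neg hv (dAct_mem hw (C.pos_subset hα))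

/-- `s_γ` permutes the positive roots it keeps positive, and a positive root `α` with
`s_γ α < 0` that is negative at `s_γ x` is already negative at `x`; only `γ` is lost. -/
lemma card_filter_reflection_apply_neg_lt {v x : V} (hv : v ∈ C.chamber) {γ : Dual ℝ V}
    (hγ : γ ∈ C.Pos) (h : γ (C.coroot γ) = 2) (hγx : γ x < 0) :
    #(C.Pos.filter fun α => α (reflection h x) < 0) <
      #(C.Pos.filter fun α => α x < 0) := by
  classical
  set s := reflection h
  have hs : ∀ α, dAct s α = α - α (C.coroot γ) • γ := dAct_reflection _
  have hsx : ∀ α : Dual ℝ V, α (s x) = dAct s α x := fun α => rfl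
  have hss : ∀ α, dAct s (dAct s α) = α := fun α => by
    simpa only [s, reflection_inv] using dAct_inv_dAct s α
  have hsΦ : ∀ α ∈ C.Pos, dAct s α ∈ C.Φ := fun α hα =>
    dAct_mem (reflection_mem_W (C.pos_subset hγ)) (C.pos_subset hα)
  -- `s α = α - ⟨α, γ^∨⟩ γ` is negative on the chamber, so `⟨α, γ^∨⟩ > 0`
  have hneg : ∀ α ∈ C.Pos, dAct s α ∉ C.Pos → dAct s α x < 0 → α x < 0 := by
    intro α hα hsα hsαx
    have h1 := (mem_pos_iff_pos_apply hv (hsΦ α hα)).not.1 hsα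
    have h2 := hv α hα
    have h3 := hv γ hγ
    rw [hs] at h1 hsαx
    simp only [LinearMap.sub_apply, LinearMap.smul_apply, smul_eq_mul] at h1 hsαx
    nlinarith
  have hsγ : dAct s γ = -γ := by
    rw [hs, h]
    module
  set P := fun α => dAct s α ∈ C.Pos
  have hsame : #((C.Pos.filter fun α => α (s x) < 0).filter P) =
      #((C.Pos.filter fun α => α x < 0).filter P) := by
    refine card_nbij' (dAct s) (dAct s) ?_ ?_ (fun α _ => hss α) (fun α _ => hss α) <;>
    · intro α hα
      simp only [mem_coe, mem_filter, P, hsx, hss] at hα ⊢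
      tauto
  have hflip : (C.Pos.filter fun α => α (s x) < 0).filter (¬ P ·) ⊂
      (C.Pos.filter fun α => α x < 0).filter (¬ P ·) := by
    refine ssubset_iff_of_subset (fun α hα => ?_) |>.2 ⟨γ, ?_, ?_⟩
    · simp only [mem_filter, P, hsx] at hα ⊢
      exact ⟨⟨hα.1.1, hneg α hα.1.1 hα.2 hα.1.2⟩, hα.2⟩
    · simp only [mem_filter, P, hsγ]
      exact ⟨⟨hγ, hγx⟩, neg_notMem_pos hγ⟩
    · simp only [mem_filter, P, hsx, hsγ, LinearMap.neg_apply, not_and]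
      intro _ h
      linarith
  calc _ = _ := (card_filter_add_card_filter_not P).symm
    _ < _ := add_lt_add_of_le_of_lt hsame.le (card_lt_card hflip)
    _ = _ := card_filter_add_card_filter_not P

lemma len_mul_reflection_lt {w : V ≃ₗ[ℝ] V} (hw : w ∈ C.W) {γ : Dual ℝ V} (hγ : γ ∈ C.invSet w)
    (h : γ (C.coroot γ) = 2) : C.len (w * reflection h) < C.len w := by
  obtain ⟨v, hv⟩ := C.chamber_nonempty
  obtain ⟨hγP, hγv⟩ := mem_filter.1 (invSet_eq_filter hv hw ▸ hγ)
  rw [len, len, invSet_eq_filter hv hw,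
    invSet_eq_filter hv (mul_mem hw (reflection_mem_W (C.pos_subset hγP)))]
  exact card_filter_reflection_apply_neg_lt hv hγP h hγv

lemma IsMinRep.apply_ne_zero_of_mem_invSet {w : V ≃ₗ[ℝ] V} {μ : V} (hmin : C.IsMinRep w μ) {γ : Dual ℝ V}
    (hγ : γ ∈ C.invSet w) : γ μ ≠ 0 := by
  intro h0
  have hγΦ : γ ∈ C.Φ := C.pos_subset (mem_invSet.1 hγ).1
  have hfix : reflection (C.coroot_self γ hγΦ) μ = μ := by
    rw [reflection_apply, h0, zero_smul, sub_zero]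
  exact (hmin.2 _ (reflection_mem_W hγΦ) hfix).not_gt (len_mul_reflection_lt hmin.1 hγ _)

lemma IsMinRep.one_le_apply_of_mem_invSet {w : V ≃ₗ[ℝ] V} {μ : V} (hint : C.IsIntegral μ)
    (hdom : C.IsDominant μ) (hmin : C.IsMinRep w μ) {γ : Dual ℝ V} (hγ : γ ∈ C.invSet w) :
    1 ≤ γ μ := by
  have hγP : γ ∈ C.Pos := (mem_invSet.1 hγ).1
  obtain ⟨n, hn⟩ := hint γ (C.pos_subset hγP)
  have h0 : (0 : ℝ) ≤ n := hn ▸ hdom γ hγP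
  have h1 : (n : ℝ) ≠ 0 := hn ▸ hmin.apply_ne_zero_of_mem_invSet hγ
  rw [hn]
  exact_mod_cast (show 0 < n by exact_mod_cast h0.lt_of_ne h1.symm)

lemma IsMinRep.apply_le_neg_one {w : V ≃ₗ[ℝ] V} {μ : V} (hint : C.IsIntegral μ)
    (hdom : C.IsDominant μ) (hmin : C.IsMinRep w μ) {α : Dual ℝ V} (hα : α ∈ C.Pos)
    (h : dAct w⁻¹ α ∉ C.Pos) : α (w μ) ≤ -1 := by
  have hγ : -dAct w⁻¹ α ∈ C.invSet w := by
    refine mem_invSet.2 ⟨neg_mem_pos_of_notMem (dAct_mem (inv_mem hmin.1) (C.pos_subset hα)) h, ?_⟩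
    simpa using hα
  have := hmin.one_le_apply_of_mem_invSet hint hdom hγ
  simp only [LinearMap.neg_apply, dAct_apply] at this
  exact le_neg.1 this

variable (C) in
lemma sepCount_eq_sum_natAbs {S T : Set V} (a b : Dual ℝ V → ℤ) (hS : S.Nonempty)
    (hT : T.Nonempty) (hSa : ∀ α ∈ C.Pos, ∀ v ∈ S, a α < α v ∧ α v < a α + 1)
    (hTb : ∀ α ∈ C.Pos, ∀ v ∈ T, b α < α v ∧ α v < b α + 1) :
    C.sepCount S T = ∑ α ∈ C.Pos, (b α - a α).natAbs := by
  classical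
  set I : Dual ℝ V → Finset ℤ := fun α => Ioc (a α) (b α) ∪ Ioc (b α) (a α)
  have hset : {p : Dual ℝ V × ℤ | p.1 ∈ C.Pos ∧ SepBy p.1 p.2 S T} =
      ↑(C.Pos.biUnion fun α => (I α).map (Function.Embedding.sectR α ℤ)) := by
    ext ⟨α, n⟩
    simp only [Set.mem_ofPred_eq, coe_biUnion, mem_coe, mem_map, Set.mem_iUnion,
      Function.Embedding.sectR_apply, Prod.mk.injEq, exists_prop]
    constructor
    · rintro ⟨hα, h⟩
      exact ⟨α, hα, n, (sepBy_iff_mem_Ioc hS hT (hSa α hα) (hTb α hα) n).1 h, rfl, rfl⟩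
    · rintro ⟨α, hα, n, hn, rfl, rfl⟩
      exact ⟨hα, (sepBy_iff_mem_Ioc hS hT (hSa α hα) (hTb α hα) n).2 hn⟩
  have hdisj : (C.Pos : Set (Dual ℝ V)).PairwiseDisjoint
      fun α => (I α).map (Function.Embedding.sectR α ℤ) := by
    intro α _ β _ hαβ
    simp only [Function.onFun, disjoint_left, mem_map, Function.Embedding.sectR_apply]
    rintro _ ⟨n, _, rfl⟩ ⟨m, _, h⟩
    exact hαβ (Prod.mk.inj h).1.symm
  rw [sepCount, hset, Set.ncard_coe_finset, card_biUnion hdisj]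
  refine sum_congr rfl fun α _ => ?_
  have : Disjoint (Ioc (a α) (b α)) (Ioc (b α) (a α)) := by
    simp only [disjoint_left, mem_Ioc]
    omega
  rw [card_map, card_union_of_disjoint this, Int.card_Ioc, Int.card_Ioc]
  omega

lemma IsIntegral.floor_apply {ν : V} (hν : C.IsIntegral ν) {α : Dual ℝ V} (hα : α ∈ C.Φ) :
    (⌊α ν⌋ : ℝ) = α ν := by
  obtain ⟨n, hn⟩ := hν α hα
  rw [hn, Int.floor_intCast]

open Classical in
lemma affLen_affT_neg {ν : V} (hν : C.IsIntegral ν) {u : V ≃ₗ[ℝ] V} (hu : u ∈ C.W) :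
    (C.affLen (affT (-ν) u) : ℝ) =
      ∑ α ∈ C.Pos, |α ν + if dAct u⁻¹ α ∈ C.Pos then 0 else 1| := by
  obtain ⟨v₀, hv₀⟩ := C.alcove_nonempty
  set ε : Dual ℝ V → ℤ := fun α => if dAct u⁻¹ α ∈ C.Pos then 0 else 1
  have hfloor : ∀ α ∈ C.Pos, (⌊α ν⌋ : ℝ) = α ν := fun α hα => hν.floor_apply (C.pos_subset hα)
  have hcount := C.sepCount_eq_sum_natAbs (T := affT (-ν) u '' C.alcove) (fun _ => 0)
    (fun α => -⌊α ν⌋ - ε α) ⟨v₀, hv₀⟩ ⟨_, Set.mem_image_of_mem _ hv₀⟩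
    (fun α hα v hv => by simpa using hv α hα) ?_
  · rw [affLen, hcount, Nat.cast_sum]
    refine sum_congr rfl fun α hα => ?_
    rw [Nat.cast_natAbs, Int.cast_abs, ← abs_neg]
    push_cast
    rw [hfloor α hα]
    simp only [ε]
    split_ifs <;> push_cast <;> ring_nf
  · rintro α hα _ ⟨v, hv, rfl⟩
    have hval : α (affT (-ν) u v) = dAct u⁻¹ α v - α ν := by
      simp only [affT, map_add, map_neg]
      rfl
    have hk := hfloor α hα
    rw [hval]
    simp only [ε]
    split_ifs with h
    · have := hv _ h
      push_cast
      constructor <;> linarith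
    · have := neg_one_lt_apply_of_mem_alcove hv (dAct_mem (inv_mem hu) (C.pos_subset hα)) h
      push_cast
      constructor <;> linarith

variable (C) in
open Classical in
noncomputable def absRoot (β : Dual ℝ V) : Dual ℝ V := if β ∈ C.Pos then β else -β

lemma absRoot_eq_or (β : Dual ℝ V) : C.absRoot β = β ∨ C.absRoot β = -β := by
  unfold absRoot
  split_ifs <;> simp

lemma absRoot_of_mem_pos {β : Dual ℝ V} (hβ : β ∈ C.Pos) : C.absRoot β = β := if_pos hβ

lemma absRoot_of_notMem_pos {β : Dual ℝ V} (hβ : β ∉ C.Pos) : C.absRoot β = -β := if_neg hβ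

lemma absRoot_mem_pos {β : Dual ℝ V} (hβ : β ∈ C.Φ) : C.absRoot β ∈ C.Pos := by
  by_cases h : β ∈ C.Pos
  · rwa [absRoot_of_mem_pos h]
  · rw [absRoot_of_notMem_pos h]
    exact neg_mem_pos_of_notMem hβ h

lemma absRoot_neg {β : Dual ℝ V} (hβ : β ∈ C.Φ) : C.absRoot (-β) = C.absRoot β := by
  rcases C.pos_partition β hβ with ⟨h, h'⟩ | ⟨h, h'⟩
  · rw [absRoot_of_notMem_pos h', absRoot_of_mem_pos h, neg_neg]
  · rw [absRoot_of_mem_pos h, absRoot_of_notMem_pos h']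

lemma absRoot_dAct_inv_absRoot_dAct {u : V ≃ₗ[ℝ] V} {α : Dual ℝ V} (hα : α ∈ C.Pos) :
    C.absRoot (dAct u⁻¹ (C.absRoot (dAct u α))) = α := by
  rcases C.absRoot_eq_or (dAct u α) with h | h <;>
    simp only [h, dAct_neg, dAct_inv_dAct, absRoot_neg (C.pos_subset hα), absRoot_of_mem_pos hα]

lemma sum_absRoot_dAct {M : Type*} [AddCommMonoid M] {u : V ≃ₗ[ℝ] V} (hu : u ∈ C.W)
    (f : Dual ℝ V → M) : ∑ α ∈ C.Pos, f (C.absRoot (dAct u α)) = ∑ β ∈ C.Pos, f β := by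
  refine sum_nbij' (fun α => C.absRoot (dAct u α)) (fun β => C.absRoot (dAct u⁻¹ β))
    (fun α hα => absRoot_mem_pos (dAct_mem hu (C.pos_subset hα)))
    (fun β hβ => absRoot_mem_pos (dAct_mem (inv_mem hu) (C.pos_subset hβ)))
    (fun α hα => absRoot_dAct_inv_absRoot_dAct hα) (fun β hβ => ?_) (fun _ _ => rfl)
  simpa using absRoot_dAct_inv_absRoot_dAct (u := u⁻¹) hβ

open Classical in
lemma IsMinRep.abs_apply_add_ite {w : V ≃ₗ[ℝ] V} {μ : V} (hint : C.IsIntegral μ)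
    (hdom : C.IsDominant μ) (hmin : C.IsMinRep w μ) {α : Dual ℝ V} (hα : α ∈ C.Pos) :
    |α (w μ) + if dAct w⁻¹ α ∈ C.Pos then 0 else 1| =
      C.absRoot (dAct w⁻¹ α) μ - if C.absRoot (dAct w⁻¹ α) ∈ C.invSet w then 1 else 0 := by
  have happ : α (w μ) = dAct w⁻¹ α μ := rfl
  by_cases h : dAct w⁻¹ α ∈ C.Pos
  · have hnot : dAct w⁻¹ α ∉ C.invSet w := fun h' =>
      neg_notMem_pos hα (by simpa using (mem_invSet.1 h').2)
    rw [if_pos h, absRoot_of_mem_pos h, if_neg hnot, happ, add_zero, sub_zero,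
      abs_of_nonneg (hdom _ h)]
  · have hmem : -dAct w⁻¹ α ∈ C.invSet w :=
      mem_invSet.2 ⟨neg_mem_pos_of_notMem (dAct_mem (inv_mem hmin.1) (C.pos_subset hα)) h,
        by simpa using hα⟩
    have hle := hmin.apply_le_neg_one hint hdom hα h
    rw [if_neg h, absRoot_of_notMem_pos h, if_pos hmem, abs_of_nonpos (by linarith),
      LinearMap.neg_apply, ← happ]
    ring

lemma IsMinRep.affLen_eq {w : V ≃ₗ[ℝ] V} {μ : V} (hint : C.IsIntegral μ)
    (hdom : C.IsDominant μ) (hmin : C.IsMinRep w μ) :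
    (C.affLen (affT (-(w μ)) w) : ℝ) = ∑ α ∈ C.Pos, α μ - C.len w := by
  classical
  have hI : C.invSet w ⊆ C.Pos := fun γ hγ => (mem_invSet.1 hγ).1
  rw [C.affLen_affT_neg (hint.apply hmin.1) hmin.1,
    sum_congr rfl fun α hα => hmin.abs_apply_add_ite hint hdom hα,
    C.sum_absRoot_dAct (inv_mem hmin.1) fun β => β μ - if β ∈ C.invSet w then 1 else 0,
    sum_sub_distrib, sum_ite_mem, inter_eq_right.2 hI, sum_const, len, nsmul_one]

lemma IsMinRep.affLen_le {w : V ≃ₗ[ℝ] V} {μ : V} (hint : C.IsIntegral μ)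
    (hdom : C.IsDominant μ) (hmin : C.IsMinRep w μ) {u : V ≃ₗ[ℝ] V} (hu : u ∈ C.W) :
    C.affLen (affT (-(w μ)) w) ≤ C.affLen (affT (-(w μ)) u) := by
  classical
  suffices (C.affLen (affT (-(w μ)) w) : ℝ) ≤ C.affLen (affT (-(w μ)) u) by exact_mod_cast this
  rw [C.affLen_affT_neg (hint.apply hmin.1) hmin.1, C.affLen_affT_neg (hint.apply hmin.1) hu]
  refine sum_le_sum fun α hα => ?_
  by_cases h : dAct w⁻¹ α ∈ C.Pos
  · have hnn : 0 ≤ α (w μ) := hdom _ h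
    rw [if_pos h, add_zero, abs_of_nonneg hnn]
    split_ifs <;> rw [le_abs] <;> left <;> linarith
  · have hle := hmin.apply_le_neg_one hint hdom hα h
    rw [if_neg h, abs_of_nonpos (by linarith)]
    split_ifs <;> rw [le_abs] <;> right <;> linarith

variable (C) in
lemma two_mul_rho_apply (ν : V) : 2 * C.rho ν = ∑ α ∈ C.Pos, α ν := by
  simp [rho, LinearMap.sum_apply]

end RootSystemCtx

/-- Let `μ` be a dominant integral coweight, `w ∈ W₀` a minimal
coset representative for `μ`, and `x_w := t_{−w(μ)}w`.  Then `ℓ(x_w) ≤ ℓ(t_{−w(μ)}u)`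
for every `u ∈ W₀`, and `ℓ(x_w) = ℓ(t_{−μ}) − ℓ(w)`, where moreover
`ℓ(t_{−μ}) = Σ_{α ∈ Φ⁺} ⟨α, μ⟩ = ⟨2ρ, μ⟩`; in particular `ℓ(x_w) = ⟨2ρ, μ⟩ − ℓ(w)`. -/
theorem minimal_coset_affine_length
    {V : Type*} [AddCommGroup V] [Module ℝ V] [FiniteDimensional ℝ V]
    (C : RootSystemCtx V) (μ : V)
    (hint : C.IsIntegral μ) (hdom : C.IsDominant μ)
    (w : V ≃ₗ[ℝ] V) (hmin : C.IsMinRep w μ) :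
    (∀ u ∈ C.W, C.affLen (affT (-(w μ)) w) ≤ C.affLen (affT (-(w μ)) u)) ∧
    (C.affLen (affT (-(w μ)) w) : ℤ) = (C.affLen (affT (-μ) 1) : ℤ) - (C.len w : ℤ) ∧
    (C.affLen (affT (-μ) 1) : ℝ) = ∑ α ∈ C.Pos, α μ ∧
    (C.affLen (affT (-μ) 1) : ℝ) = 2 * C.rho μ ∧
    (C.affLen (affT (-(w μ)) w) : ℝ) = 2 * C.rho μ - (C.len w : ℝ) := by
  have htrans : (C.affLen (affT (-μ) 1) : ℝ) = ∑ α ∈ C.Pos, α μ := by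
    rw [C.affLen_affT_neg hint C.W.one_mem]
    refine Finset.sum_congr rfl fun α hα => ?_
    rw [inv_one, dAct_one, if_pos hα, add_zero, abs_of_nonneg (hdom α hα)]
  have hxw := hmin.affLen_eq hint hdom
  have hrho := C.two_mul_rho_apply μ
  refine ⟨fun u hu => hmin.affLen_le hint hdom hu, ?_, htrans, htrans.trans hrho.symm, ?_⟩
  · have h : (C.affLen (affT (-(w μ)) w) : ℝ) = C.affLen (affT (-μ) 1) - C.len w := by
      rw [hxw, htrans]
    exact_mod_cast h
  · rw [hxw, hrho]
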